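/- Let X be a special abstract rank one group with abelian unipotent subgroups A and B, and H = N_X(A) ∩ N_X(B). If |A| ≥ 4, then A = [A,H]. -/

import Mathlib

/-!
Put `M := [A, H] ≤ A` and note `A ∩ H = 1`. Any element interchanging `A` and `B` conjugates
`b(d)` to `d⁻¹` modulo `M`, since it differs by an element of `H` from `d⁻¹ b(d) d⁻¹`, which does
so exactly; hence the inverse of `b : A♯ → B♯` is multiplicative modulo `M`. For `x, y ∈ A♯`
with `x y ≠ 1`, the element `w := b(x y)⁻¹ x b(y)` normalizes `A` and conjugates `B` as
`q := b⁻¹(b x · b y)` does, so `w ∈ H q`; likewise `w⁻¹ ∈ H q'` with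
`q' := b⁻¹(b(x)⁻¹ · b(x y))`. From `w w⁻¹ = 1` and `A ∩ H = 1` one gets `q q' ∈ M`, and since
`q ≡ x y`, `q' ≡ y` modulo `M`, also `x y² ∈ M`. If `|A| ≥ 4`, for any `x, y ∈ A♯` some `t ∈ A♯`
has `x t, y t ≠ 1`, so `x y⁻¹ = (x t²)(y t²)⁻¹ ∈ M`, and every element of `A` is such a quotient.
-/

/-- Conjugate `S ^ g = g⁻¹ S g` of a subgroup. -/
def conjSub {X : Type*} [Group X] (S : Subgroup X) (g : X) : Subgroup X :=
  S.map ((MulAut.conj g⁻¹).toMonoidHom)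

open Subgroup
open scoped commutatorElement

section ConjSub

variable {X : Type*} [Group X] {S T : Subgroup X} {g h x : X}

lemma mem_conjSub : x ∈ conjSub S g ↔ g * x * g⁻¹ ∈ S := by
  rw [conjSub, mem_map_equiv, MulAut.conj_symm_apply, inv_inv]

lemma conjSub_mul : conjSub S (g * h) = conjSub (conjSub S g) h := by
  ext x
  simp only [mem_conjSub, mul_inv_rev, mul_assoc]

lemma conjSub_one : conjSub S 1 = S := by
  ext x
  simp [mem_conjSub]

lemma conjSub_eq_self_iff : conjSub S g = S ↔ g ∈ normalizer (S : Set X) := by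
  simp only [SetLike.ext_iff, mem_conjSub, mem_normalizer_iff]
  exact forall_congr' fun _ => iff_comm

lemma conjSub_of_mem (hg : g ∈ S) : conjSub S g = S :=
  conjSub_eq_self_iff.2 (le_normalizer hg)

lemma conjSub_conjSub_inv : conjSub (conjSub S g) g⁻¹ = S := by
  rw [← conjSub_mul, mul_inv_cancel, conjSub_one]

lemma conjSub_inv_conjSub : conjSub (conjSub S g⁻¹) g = S := by
  rw [← conjSub_mul, inv_mul_cancel, conjSub_one]

lemma conjSub_inv_eq_of_conjSub_eq (h : conjSub S g = T) : conjSub T g⁻¹ = S := by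
  rw [← h, conjSub_conjSub_inv]

end ConjSub

section OppositeSubgroups

variable {X : Type*} [Group X] {A B : Subgroup X}

lemma eq_one_of_mem_normalizer (hAB : A ≠ B)
    (hex : ∀ a ∈ A, a ≠ 1 → ∃ b ∈ B, conjSub A b = conjSub B a) {a : X} (ha : a ∈ A)
    (hN : a ∈ normalizer (B : Set X)) : a = 1 := by
  by_contra ha1
  obtain ⟨b, hb, hab⟩ := hex a ha ha1
  rw [conjSub_eq_self_iff.2 hN] at hab
  exact hAB (by rw [← conjSub_inv_eq_of_conjSub_eq hab, conjSub_of_mem (inv_mem hb)])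

lemma eq_of_conjSub_eq (hAB : A ≠ B)
    (hex : ∀ a ∈ A, a ≠ 1 → ∃ b ∈ B, conjSub A b = conjSub B a) {a₁ a₂ : X}
    (h₁ : a₁ ∈ A) (h₂ : a₂ ∈ A) (h : conjSub B a₁ = conjSub B a₂) : a₁ = a₂ := by
  have hN : a₁ * a₂⁻¹ ∈ normalizer (B : Set X) := by
    rw [← conjSub_eq_self_iff, conjSub_mul, h, conjSub_conjSub_inv]
  exact mul_inv_eq_one.1 (eq_one_of_mem_normalizer hAB hex (mul_mem h₁ (inv_mem h₂)) hN)

def Interchanges (A B : Subgroup X) (g : X) : Prop :=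
  conjSub A g = B ∧ conjSub B g = A

lemma Interchanges.symm {g : X} (hg : Interchanges A B g) : Interchanges B A g :=
  ⟨hg.2, hg.1⟩

lemma Interchanges.inv_mul_mem {g g' : X} (hg : Interchanges A B g)
    (hg' : Interchanges A B g') :
    g⁻¹ * g' ∈ normalizer (A : Set X) ⊓ normalizer (B : Set X) := by
  simp only [mem_inf, ← conjSub_eq_self_iff, conjSub_mul,
    conjSub_inv_eq_of_conjSub_eq hg.1, conjSub_inv_eq_of_conjSub_eq hg.2, hg'.1, hg'.2, and_self]

lemma interchanges_of_conjSub {a b : X} (hb : b ∈ B) (h : conjSub A b = conjSub B a)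
    (h' : conjSub A b⁻¹ = conjSub B a⁻¹) : Interchanges A B (b⁻¹ * a * b⁻¹) := by
  constructor <;> simp only [conjSub_mul]
  · rw [h', conjSub_inv_conjSub, conjSub_of_mem (inv_mem hb)]
  · rw [conjSub_of_mem (inv_mem hb), ← h, conjSub_conjSub_inv]

lemma conj_eq_inv_of_conjSub (hAB : A ≠ B)
    (hex : ∀ a ∈ A, a ≠ 1 → ∃ b ∈ B, conjSub A b = conjSub B a) {a b : X} (ha : a ∈ A)
    (hb : b ∈ B) (h : conjSub A b = conjSub B a) (h' : conjSub A b⁻¹ = conjSub B a⁻¹) :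
    (b⁻¹ * a * b⁻¹)⁻¹ * a * (b⁻¹ * a * b⁻¹) = b⁻¹ := by
  have hu : b * a⁻¹ * b * a * b⁻¹ ∈ A := by
    have : a⁻¹ * b * a ∈ conjSub A b := by
      rw [h, mem_conjSub, show a * (a⁻¹ * b * a) * a⁻¹ = b by group]
      exact hb
    rw [mem_conjSub] at this
    simpa only [mul_assoc] using this
  have hconj : conjSub B (b * a⁻¹ * b * a * b⁻¹) = conjSub B a⁻¹ := by
    simp only [conjSub_mul]
    rw [conjSub_of_mem hb, ← h', conjSub_inv_conjSub, conjSub_of_mem ha]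
  have hu' := eq_of_conjSub_eq hAB hex hu (inv_mem ha) hconj
  calc (b⁻¹ * a * b⁻¹)⁻¹ * a * (b⁻¹ * a * b⁻¹) = b * a⁻¹ * b * a * b⁻¹ * a * b⁻¹ := by group
    _ = b⁻¹ := by rw [hu']; group

end OppositeSubgroups

lemma exists_mem_ne_of_four_le_mk {α : Type*} {s : Set α} (hs : 4 ≤ Cardinal.mk s)
    (u v w : α) : ∃ t ∈ s, t ≠ u ∧ t ≠ v ∧ t ≠ w := by
  classical
  by_contra! hsub
  have hle : Cardinal.mk s ≤ 3 := calc
    Cardinal.mk s ≤ Cardinal.mk (({u, v, w} : Finset α) : Set α) :=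
      Cardinal.mk_le_mk_of_subset fun t ht => by
        have := hsub t ht
        simp only [Finset.coe_insert, Finset.coe_singleton, Set.mem_insert_iff,
          Set.mem_singleton_iff]
        tauto
    _ ≤ 3 := by
      rw [Finset.coe_sort_coe, Cardinal.mk_coe_finset]
      exact_mod_cast Finset.card_le_three
  exact absurd (hs.trans hle) (by norm_num)

structure SpecialPair (X : Type*) [Group X] where
  A : Subgroup X
  B : Subgroup X
  ne : A ≠ B
  isMulCommutative_A : IsMulCommutative A
  b : X → X
  b_mem : ∀ {a}, a ∈ A → a ≠ 1 → b a ∈ B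
  conjSub_b : ∀ {a}, a ∈ A → a ≠ 1 → conjSub A (b a) = conjSub B a
  b_unique : ∀ {a}, a ∈ A → a ≠ 1 → ∀ {z}, z ∈ B → z ≠ 1 → conjSub A z = conjSub B a → z = b a
  b_inv : ∀ {a}, a ∈ A → a ≠ 1 → b a⁻¹ = (b a)⁻¹
  exists_conjSub_eq : ∀ {z}, z ∈ B → z ≠ 1 → ∃ a ∈ A, a ≠ 1 ∧ conjSub B a = conjSub A z

namespace SpecialPair

variable {X : Type*} [Group X] (S : SpecialPair X)

def H : Subgroup X := normalizer (S.A : Set X) ⊓ normalizer (S.B : Set X)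

def M : Subgroup X := ⁅S.A, S.H⁆

lemma M_le_A : S.M ≤ S.A :=
  le_normalizer_iff_commutator_le_left.1 inf_le_left

lemma mul_comm_of_mem {x y : X} (hx : x ∈ S.A) (hy : y ∈ S.A) : x * y = y * x :=
  have := S.isMulCommutative_A
  setLike_mul_comm hx hy

lemma exists_conjSub_A : ∀ a ∈ S.A, a ≠ 1 → ∃ z ∈ S.B, conjSub S.A z = conjSub S.B a :=
  fun _ ha ha1 => ⟨_, S.b_mem ha ha1, S.conjSub_b ha ha1⟩

lemma exists_conjSub_B : ∀ z ∈ S.B, z ≠ 1 → ∃ a ∈ S.A, conjSub S.B a = conjSub S.A z :=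
  fun _ hz hz1 =>
    let ⟨a, ha, _, h⟩ := S.exists_conjSub_eq hz hz1
    ⟨a, ha, h⟩

lemma eq_one_of_mem_H {a : X} (ha : a ∈ S.A) (hH : a ∈ S.H) : a = 1 :=
  eq_one_of_mem_normalizer S.ne S.exists_conjSub_A ha hH.2

lemma eq_of_b_eq {x y : X} (hx : x ∈ S.A) (hx1 : x ≠ 1) (hy : y ∈ S.A) (hy1 : y ≠ 1)
    (h : S.b x = S.b y) : x = y :=
  eq_of_conjSub_eq S.ne S.exists_conjSub_A hx hy
    (by rw [← S.conjSub_b hx hx1, h, S.conjSub_b hy hy1])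

lemma exists_b_eq {z : X} (hz : z ∈ S.B) (hz1 : z ≠ 1) : ∃ a ∈ S.A, a ≠ 1 ∧ S.b a = z := by
  obtain ⟨a, ha, ha1, h⟩ := S.exists_conjSub_eq hz hz1
  exact ⟨a, ha, ha1, (S.b_unique ha ha1 hz hz1 h.symm).symm⟩

lemma conjSub_b_inv {a : X} (ha : a ∈ S.A) (ha1 : a ≠ 1) :
    conjSub S.A (S.b a)⁻¹ = conjSub S.B a⁻¹ := by
  rw [← S.b_inv ha ha1]
  exact S.conjSub_b (inv_mem ha) (inv_ne_one.2 ha1)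

lemma exists_conj_b_eq {g d : X} (hg : Interchanges S.A S.B g) (hd : d ∈ S.A) (hd1 : d ≠ 1) :
    ∃ μ ∈ S.M, g⁻¹ * S.b d * g = d⁻¹ * μ := by
  have hm := interchanges_of_conjSub hd (S.conjSub_b hd hd1).symm (S.conjSub_b_inv hd hd1).symm
  have hconj := conj_eq_inv_of_conjSub S.ne.symm S.exists_conjSub_B (S.b_mem hd hd1) hd
    (S.conjSub_b hd hd1).symm (S.conjSub_b_inv hd hd1).symm
  set m := d⁻¹ * S.b d * d⁻¹
  have hH : m⁻¹ * g ∈ S.H := by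
    rw [H, inf_comm]
    exact hm.inv_mul_mem hg.symm
  refine ⟨⁅d, (m⁻¹ * g)⁻¹⁆, commutator_mem_commutator hd (inv_mem hH), ?_⟩
  calc g⁻¹ * S.b d * g = (m⁻¹ * g)⁻¹ * (m⁻¹ * S.b d * m) * (m⁻¹ * g) := by group
    _ = d⁻¹ * ⁅d, (m⁻¹ * g)⁻¹⁆ := by rw [hconj, commutatorElement_def]; group

lemma mul_mul_inv_mem_M {x y z : X} (hx : x ∈ S.A) (hx1 : x ≠ 1) (hy : y ∈ S.A) (hy1 : y ≠ 1)
    (hz : z ∈ S.A) (hz1 : z ≠ 1) (h : S.b x * S.b y = S.b z) : x * y * z⁻¹ ∈ S.M := by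
  have hg :=
    interchanges_of_conjSub (S.b_mem hx hx1) (S.conjSub_b hx hx1) (S.conjSub_b_inv hx hx1)
  obtain ⟨μx, hμx, ex⟩ := S.exists_conj_b_eq hg hx hx1
  obtain ⟨μy, hμy, ey⟩ := S.exists_conj_b_eq hg hy hy1
  obtain ⟨μz, hμz, ez⟩ := S.exists_conj_b_eq hg hz hz1
  have hz' : z⁻¹ = x⁻¹ * μx * (y⁻¹ * μy) * μz⁻¹ := by
    rw [← ex, ← ey, eq_mul_inv_iff_mul_eq, ← ez, ← h]
    group
  have : x * y * z⁻¹ = μx * μy * μz⁻¹ := calc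
    x * y * z⁻¹ = x * (y * x⁻¹) * μx * y⁻¹ * μy * μz⁻¹ := by rw [hz']; group
    _ = y * μx * y⁻¹ * μy * μz⁻¹ := by rw [S.mul_comm_of_mem hy (inv_mem hx)]; group
    _ = μx * μy * μz⁻¹ := by rw [S.mul_comm_of_mem hy (S.M_le_A hμx)]; group
  rw [this]
  exact mul_mem (mul_mem hμx hμy) (inv_mem hμz)

lemma mul_inv_mem_H {x y q : X} (hx : x ∈ S.A) (hx1 : x ≠ 1) (hy : y ∈ S.A) (hy1 : y ≠ 1)
    (hxy : x * y ≠ 1) (hq : q ∈ S.A) (hq1 : q ≠ 1) (h : S.b x * S.b y = S.b q) :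
    (S.b (x * y))⁻¹ * x * S.b y * q⁻¹ ∈ S.H := by
  have hxy' : x * y ∈ S.A := mul_mem hx hy
  rw [H, mem_inf, ← conjSub_eq_self_iff, ← conjSub_eq_self_iff]
  simp only [conjSub_mul]
  constructor
  · rw [S.conjSub_b_inv hxy' hxy, ← conjSub_mul (g := (x * y)⁻¹), mul_inv_rev,
      inv_mul_cancel_right, ← S.conjSub_b_inv hy hy1, conjSub_inv_conjSub,
      conjSub_of_mem (inv_mem hq)]
  · rw [conjSub_of_mem (inv_mem (S.b_mem hxy' hxy)), ← S.conjSub_b hx hx1,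
      ← conjSub_mul (g := S.b x), h, S.conjSub_b hq hq1, conjSub_conjSub_inv]

lemma mul_mem_M_of_mul_mul_mul_eq_one {h h' q q' : X} (hh : h ∈ S.H) (hh' : h' ∈ S.H)
    (hq : q ∈ S.A) (hq' : q' ∈ S.A) (e : h * q * h' * q' = 1) : q * q' ∈ S.M := by
  have hqh : h * q * h⁻¹ ∈ S.A := (mem_normalizer_iff.1 hh.1 q).1 hq
  have hhh' : h * h' = (h * q * h⁻¹)⁻¹ * (h * q * h' * q') * q'⁻¹ := by group
  rw [e, mul_one] at hhh'
  have hh'inv : h' = h⁻¹ := eq_inv_of_mul_eq_one_right <|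
    S.eq_one_of_mem_H (hhh' ▸ mul_mem (inv_mem hqh) (inv_mem hq')) (mul_mem hh hh')
  have : q * q' = ⁅q, h⁆ * (h * q * h' * q') := by
    rw [hh'inv, commutatorElement_def]
    group
  rw [this, e, mul_one]
  exact commutator_mem_commutator hq hh

lemma exists_b_mul_b_eq {x y : X} (hx : x ∈ S.A) (hx1 : x ≠ 1) (hy : y ∈ S.A) (hy1 : y ≠ 1)
    (hxy : x * y ≠ 1) : ∃ q ∈ S.A, q ≠ 1 ∧ S.b x * S.b y = S.b q := by
  obtain ⟨q, hq, hq1, hbq⟩ := S.exists_b_eq (mul_mem (S.b_mem hx hx1) (S.b_mem hy hy1)) <| by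
    rw [Ne, mul_eq_one_iff_eq_inv, ← S.b_inv hy hy1]
    exact fun h => hxy <| mul_eq_one_iff_eq_inv.2 <|
      S.eq_of_b_eq hx hx1 (inv_mem hy) (inv_ne_one.2 hy1) h
  exact ⟨q, hq, hq1, hbq.symm⟩

lemma mul_mul_self_mem_M {x y : X} (hx : x ∈ S.A) (hx1 : x ≠ 1) (hy : y ∈ S.A) (hy1 : y ≠ 1)
    (hxy : x * y ≠ 1) : x * y * y ∈ S.M := by
  have hxy' : x * y ∈ S.A := mul_mem hx hy
  have hx1' : x⁻¹ ≠ 1 := inv_ne_one.2 hx1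
  have hy1' : x⁻¹ * (x * y) ≠ 1 := by rwa [inv_mul_cancel_left]
  obtain ⟨q, hq, hq1, hbq⟩ := S.exists_b_mul_b_eq hx hx1 hy hy1 hxy
  obtain ⟨q', hq', hq'1, hbq'⟩ := S.exists_b_mul_b_eq (inv_mem hx) hx1' hxy' hxy hy1'
  have h₀ := S.mul_inv_mem_H hx hx1 hy hy1 hxy hq hq1 hbq
  have h₁ := S.mul_inv_mem_H (inv_mem hx) hx1' hxy' hxy hy1' hq' hq'1 hbq'
  have m₀ := S.mul_mul_inv_mem_M hx hx1 hy hy1 hq hq1 hbq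
  have m₁ := S.mul_mul_inv_mem_M (inv_mem hx) hx1' hxy' hxy hq' hq'1 hbq'
  rw [inv_mul_cancel_left] at h₁ m₁
  have hqq' : q * q' ∈ S.M := S.mul_mem_M_of_mul_mul_mul_eq_one h₀ h₁ hq hq' (by group)
  have : x * y * y = (x * y * q⁻¹) * (q * q') * (y * q'⁻¹) := by
    rw [show (x * y * q⁻¹) * (q * q') * (y * q'⁻¹) = x * y * (q' * y) * q'⁻¹ by group,
      S.mul_comm_of_mem hq' hy]
    group
  rw [this]
  exact mul_mem (mul_mem m₀ hqq') m₁

lemma mul_inv_mem_M (hcard : 4 ≤ Cardinal.mk S.A) {x y : X} (hx : x ∈ S.A) (hx1 : x ≠ 1)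
    (hy : y ∈ S.A) (hy1 : y ≠ 1) : x * y⁻¹ ∈ S.M := by
  obtain ⟨t, ht, ht1, htx, hty⟩ := exists_mem_ne_of_four_le_mk hcard 1 x⁻¹ y⁻¹
  have kx := S.mul_mul_self_mem_M hx hx1 ht ht1 fun h => htx (eq_inv_of_mul_eq_one_right h)
  have ky := S.mul_mul_self_mem_M hy hy1 ht ht1 fun h => hty (eq_inv_of_mul_eq_one_right h)
  rw [show x * y⁻¹ = (x * t * t) * (y * t * t)⁻¹ by group]
  exact mul_mem kx (inv_mem ky)

theorem M_eq_A (hcard : 4 ≤ Cardinal.mk S.A) : S.M = S.A := by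
  refine le_antisymm S.M_le_A fun x hx => ?_
  by_cases hx1 : x = 1
  · exact hx1 ▸ one_mem _
  obtain ⟨y, hy, hy1, hxy, -⟩ := exists_mem_ne_of_four_le_mk hcard 1 x⁻¹ 1
  simpa using S.mul_inv_mem_M hcard (mul_mem hx hy)
    (fun h => hxy (eq_inv_of_mul_eq_one_right h)) hy hy1

end SpecialPair

theorem stmt8_general
    {X : Type*} [Group X] (A B : Subgroup X) (hAB : A ≠ B)
    (hAcomm : IsMulCommutative A)
    (hba : ∀ b ∈ B, b ≠ 1 → ∃ a ∈ A, a ≠ 1 ∧ conjSub B a = conjSub A b)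
    (bf : X → X)
    (hbf : ∀ a ∈ A, a ≠ 1 → bf a ∈ B ∧ bf a ≠ 1 ∧ conjSub A (bf a) = conjSub B a)
    (hbfu : ∀ a ∈ A, a ≠ 1 → ∀ b ∈ B, b ≠ 1 → conjSub A b = conjSub B a → b = bf a)
    (hspecial : ∀ a ∈ A, a ≠ 1 → bf a⁻¹ = (bf a)⁻¹)
    (hcard : 4 ≤ Cardinal.mk A) :
    ⁅A, Subgroup.normalizer (A : Set X) ⊓ Subgroup.normalizer (B : Set X)⁆ = A :=
  SpecialPair.M_eq_A
    { A, B, b := bf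
      ne := hAB
      isMulCommutative_A := hAcomm
      b_mem := fun ha ha1 => (hbf _ ha ha1).1
      conjSub_b := fun ha ha1 => (hbf _ ha ha1).2.2
      b_unique := fun ha ha1 _ hz hz1 h => hbfu _ ha ha1 _ hz hz1 h
      b_inv := fun ha ha1 => hspecial _ ha ha1
      exists_conjSub_eq := fun hz hz1 => hba _ hz hz1 } hcard

theorem stmt8
    {X : Type*} [Group X] (A B : Subgroup X) (hAB : A ≠ B)
    (hAcomm : IsMulCommutative A) (hBcomm : IsMulCommutative B)
    (hgen : A ⊔ B = ⊤)
    (hab : ∀ a ∈ A, a ≠ 1 → ∃ b ∈ B, b ≠ 1 ∧ conjSub A b = conjSub B a)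
    (hba : ∀ b ∈ B, b ≠ 1 → ∃ a ∈ A, a ≠ 1 ∧ conjSub B a = conjSub A b)
    (bf : X → X)
    (hbf : ∀ a ∈ A, a ≠ 1 → bf a ∈ B ∧ bf a ≠ 1 ∧ conjSub A (bf a) = conjSub B a)
    (hbfu : ∀ a ∈ A, a ≠ 1 → ∀ b ∈ B, b ≠ 1 → conjSub A b = conjSub B a → b = bf a)
    (hspecial : ∀ a ∈ A, a ≠ 1 → bf a⁻¹ = (bf a)⁻¹)
    (hcard : 4 ≤ Cardinal.mk A) :
    ⁅A, Subgroup.normalizer (A : Set X) ⊓ Subgroup.normalizer (B : Set X)⁆ = A :=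
  stmt8_general A B hAB hAcomm hba bf hbf hbfu hspecial hcard
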